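/- arXiv:1612.05201 — 2 statements merged into one kernel-verified Lean document; each statement's English description precedes it below -/
import Mathlib

section
/- Let P be an n×n row-stochastic matrix, let v ∈ ℝⁿ be a distribution vector, let δ ∈ (0,1], and set γ = δ⁻¹ − 1. Define the (n+1)×(n+1) matrix Q_{δ,v} with blocks: top-left (1−δ)P, top-right δ·1 (a column), bottom-left vᵀ (a row), bottom-right 0. Then: (1) the eigenprojection of I′ − Q_{δ,v} equals 1′·(1/(1+δ))·[vᵀ(I + γ(I−P))⁻¹ δ] (the outer product of the all-ones column vector 1′ of length n+1 with the row vector whose first n entries are (1/(1+δ))·vᵀ(I + γ(I−P))⁻¹ and whose last entry is δ/(1+δ)); and (2) as δ → 0⁺, the eigenprojection of I′ − Q_{δ,v} converges to 1′·[vᵀ(I−P)^⊢ 0]. -/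
open Matrix Filter Topology

/-- The index of a square real matrix: the smallest `k` with
`rank (A^(k+1)) = rank (A^k)`. -/
noncomputable def matIndex {m : Type*} [Fintype m] [DecidableEq m]
    (A : Matrix m m ℝ) : ℕ :=
  sInf {k : ℕ | (A ^ (k + 1)).rank = (A ^ k).rank}

/-- `Q` is the eigenprojection of `A` corresponding to the eigenvalue `0`:
an idempotent matrix whose range is the null space of `A ^ ind A` and whose
null space is the range of `A ^ ind A`. -/
def IsEigenprojection {m : Type*} [Fintype m] [DecidableEq m]
    (A Q : Matrix m m ℝ) : Prop :=
  Q * Q = Q ∧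
  LinearMap.range Q.mulVecLin = LinearMap.ker (A ^ matIndex A).mulVecLin ∧
  LinearMap.ker Q.mulVecLin = LinearMap.range (A ^ matIndex A).mulVecLin

/-- A Laplacian matrix: nonpositive off-diagonal entries and zero row sums. -/
def IsLaplacian {m : Type*} [Fintype m] (L : Matrix m m ℝ) : Prop :=
  (∀ i j, i ≠ j → L i j ≤ 0) ∧ ∀ i, ∑ j, L i j = 0

/-- A row-stochastic matrix: nonnegative entries and all row sums equal to 1. -/
def IsRowStochastic {m : Type*} [Fintype m] (P : Matrix m m ℝ) : Prop :=
  (∀ i j, 0 ≤ P i j) ∧ ∀ i, ∑ j, P i j = 1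

/-- The regularized extension `Q_{δ,v}` of a stochastic matrix `P`:
top-left block `(1-δ)P`, top-right column `δ·1`, bottom-left row `vᵀ`,
bottom-right `0`. -/
def regQ {n : ℕ} (P : Matrix (Fin n) (Fin n) ℝ) (δ : ℝ) (v : Fin n → ℝ) :
    Matrix (Fin n ⊕ Unit) (Fin n ⊕ Unit) ℝ :=
  Matrix.fromBlocks ((1 - δ) • P) (Matrix.of fun _ _ => δ)
    (Matrix.of fun _ j => v j) 0

/-! For `0 < δ ≤ 1` the matrix `Q = regQ P δ v` is row-stochastic and its fixed vectors are
constant, by a maximum principle on the `P`-block in which the hub coordinate enters with weight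
`δ > 0`. The row vector `π = (1 + δ)⁻¹ [vᵀ(I + γ(I - P))⁻¹, δ]` is a stationary distribution of `Q`,
because `vᵀ(I + γ(I - P))⁻¹ (I - (1 - δ)P) = δ vᵀ`. Hence `M = 1′πᵀ` is idempotent,
`(I′ - Q)M = M(I′ - Q) = 0` and `I′ - Q + M` is invertible, which forces `ind (I′ - Q) = 1` and
makes `M` the eigenprojection.

For the limit, `P` is nonexpansive in the sup norm, so `ind (I - P) = 1` and `I - P + J` is
invertible. With `γ = ε⁻¹ - 1` one has `(I + γ(I - P))(εI + J) = εI + (1 - ε)(I - P) + J`, so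
`(I + γ(I - P))⁻¹ = (εI + J)(εI + (1 - ε)(I - P) + J)⁻¹ → J (I - P + J)⁻¹ = J` as `ε → 0`. -/

variable {m : Type*} [Fintype m]

namespace IsRowStochastic

variable {P : Matrix m m ℝ}

lemma mulVec_one (hP : IsRowStochastic P) : P *ᵥ 1 = 1 :=
  funext fun i => by simp [mulVec, dotProduct, hP.2 i]

lemma mulVec_le (hP : IsRowStochastic P) {x : m → ℝ} {s : ℝ} (hx : ∀ j, x j ≤ s) (i : m) :
    (P *ᵥ x) i ≤ s :=
  calc (P *ᵥ x) i = ∑ j, P i j * x j := rfl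
    _ ≤ ∑ j, P i j * s := Finset.sum_le_sum fun j _ => mul_le_mul_of_nonneg_left (hx j) (hP.1 i j)
    _ = s := by rw [← Finset.sum_mul, hP.2 i, one_mul]

lemma norm_mulVec_le (hP : IsRowStochastic P) (x : m → ℝ) : ‖P *ᵥ x‖ ≤ ‖x‖ := by
  have habs : ∀ j, |x j| ≤ ‖x‖ := fun j => by simpa using norm_le_pi_norm x j
  refine (pi_norm_le_iff_of_nonneg (norm_nonneg x)).mpr fun i => ?_
  rw [Real.norm_eq_abs, abs_le]
  constructor
  · have := mulVec_le hP (x := -x) (fun j => (neg_le_abs (x j)).trans (habs j)) i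
    rw [mulVec_neg, Pi.neg_apply] at this
    linarith
  · exact mulVec_le hP (fun j => (le_abs_self _).trans (habs j)) i

end IsRowStochastic

variable [DecidableEq m]

lemma Matrix.mul_eq_zero_of_range_le_ker {A B : Matrix m m ℝ}
    (h : LinearMap.range B.mulVecLin ≤ LinearMap.ker A.mulVecLin) : A * B = 0 := by
  rw [LinearMap.range_le_ker_iff, ← mulVecLin_mul] at h
  exact toLin'.injective (by rw [toLin'_apply', h, map_zero])

lemma matIndex_eq_one {A : Matrix m m ℝ}
    (hsq : ∀ x, A *ᵥ (A *ᵥ x) = 0 → A *ᵥ x = 0) (hker : ∃ x ≠ 0, A *ᵥ x = 0) :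
    matIndex A = 1 := by
  have hrank := LinearMap.finrank_range_add_finrank_ker A.mulVecLin
  have hrank_sq := LinearMap.finrank_range_add_finrank_ker (A ^ 2).mulVecLin
  have hker_sq : LinearMap.ker (A ^ 2).mulVecLin = LinearMap.ker A.mulVecLin := by
    ext x
    simp only [LinearMap.mem_ker, mulVecLin_apply, sq, ← mulVec_mulVec]
    exact ⟨hsq x, fun h => by rw [h, mulVec_zero]⟩
  have hker_ne : Module.finrank ℝ (LinearMap.ker A.mulVecLin) ≠ 0 := by
    obtain ⟨x, hx0, hx⟩ := hker
    rw [Ne, Submodule.finrank_eq_zero, Submodule.eq_bot_iff]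
    exact fun h => hx0 (h x hx)
  have h1 : 1 ∈ {k : ℕ | (A ^ (k + 1)).rank = (A ^ k).rank} := by
    show (A ^ 2).rank = (A ^ 1).rank
    rw [pow_one, rank, rank]
    rw [hker_sq] at hrank_sq
    omega
  have h0 : (A ^ (0 + 1)).rank ≠ (A ^ 0).rank := by
    rw [zero_add, pow_one, pow_zero, rank_one, rank, ← Module.finrank_fintype_fun_eq_card (R := ℝ)]
    omega
  refine le_antisymm (Nat.sInf_le h1) (Nat.one_le_iff_ne_zero.mpr fun h => h0 ?_)
  have hmem : matIndex A ∈ {k : ℕ | (A ^ (k + 1)).rank = (A ^ k).rank} :=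
    Nat.sInf_mem ⟨1, h1⟩
  rwa [h] at hmem

lemma isUnit_add_of_ker {A M : Matrix m m ℝ} (hM2 : M * M = M) (hMA : M * A = 0)
    (hker : ∀ x, A *ᵥ x = 0 → M *ᵥ x = 0 → x = 0) : IsUnit (A + M) := by
  rw [← mulVec_injective_iff_isUnit]
  refine (injective_iff_map_eq_zero (A + M).mulVecLin).mpr fun x hx => ?_
  rw [mulVecLin_apply, add_mulVec] at hx
  have hMx : M *ᵥ x = 0 := by
    simpa [mulVec_add, mulVec_mulVec, hMA, hM2] using congrArg (M *ᵥ ·) hx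
  exact hker x (by simpa [hMx] using hx) hMx

lemma isEigenprojection_of_isUnit_add {A M : Matrix m m ℝ} (hM2 : M * M = M)
    (hAM : A * M = 0) (hMA : M * A = 0) (hM0 : M ≠ 0) (hU : IsUnit (A + M)) :
    IsEigenprojection A M := by
  have hinj := mulVec_injective_iff_isUnit.mpr hU
  have hsurj := mulVec_surjective_iff_isUnit.mpr hU
  have hfix : ∀ x, A *ᵥ x = 0 → M *ᵥ x = x := fun x hx => hinj <| by
    rw [mulVec_mulVec, add_mul, hAM, hM2, zero_add, add_mulVec, hx, zero_add]
  have hrange : LinearMap.range M.mulVecLin = LinearMap.ker A.mulVecLin := by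
    ext x
    simp only [LinearMap.mem_range, LinearMap.mem_ker, mulVecLin_apply]
    refine ⟨?_, fun hx => ⟨x, hfix x hx⟩⟩
    rintro ⟨y, rfl⟩
    rw [mulVec_mulVec, hAM, zero_mulVec]
  have hker : LinearMap.ker M.mulVecLin = LinearMap.range A.mulVecLin := by
    ext x
    simp only [LinearMap.mem_range, LinearMap.mem_ker, mulVecLin_apply]
    constructor
    · intro hx
      obtain ⟨y, rfl⟩ := hsurj x
      have hMy : M *ᵥ y = 0 := by
        rwa [mulVec_mulVec, mul_add, hMA, hM2, zero_add] at hx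
      exact ⟨y, by rw [add_mulVec, hMy, add_zero]⟩
    · rintro ⟨y, rfl⟩
      rw [mulVec_mulVec, hMA, zero_mulVec]
  have hindex : matIndex A = 1 := by
    refine matIndex_eq_one (fun x hx => ?_) ?_
    · rw [← hfix _ hx, mulVec_mulVec, hMA, zero_mulVec]
    · obtain ⟨x, hx⟩ : ∃ x, M *ᵥ x ≠ 0 := by
        by_contra! h
        exact hM0 (toLin'.injective (LinearMap.ext fun x => by simpa using h x))
      exact ⟨M *ᵥ x, hx, by rw [mulVec_mulVec, hAM, zero_mulVec]⟩
  refine ⟨hM2, ?_, ?_⟩ <;> rw [hindex, pow_one]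
  exacts [hrange, hker]

namespace IsEigenprojection

variable {A M : Matrix m m ℝ}

lemma mul_eq_zero (hM : IsEigenprojection A M) (h1 : matIndex A = 1) :
    A * M = 0 :=
  Matrix.mul_eq_zero_of_range_le_ker (by rw [hM.2.1, h1, pow_one])

lemma mul_eq_zero' (hM : IsEigenprojection A M) (h1 : matIndex A = 1) :
    M * A = 0 :=
  Matrix.mul_eq_zero_of_range_le_ker (by rw [hM.2.2, h1, pow_one])

lemma isUnit_add (hM : IsEigenprojection A M) (h1 : matIndex A = 1) :
    IsUnit (A + M) := by
  refine isUnit_add_of_ker hM.1 (mul_eq_zero' hM h1) fun x hAx hMx => ?_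
  obtain ⟨y, rfl⟩ : x ∈ LinearMap.range M.mulVecLin := by
    rw [hM.2.1, h1, pow_one]
    exact hAx
  rw [← hMx, mulVecLin_apply, mulVec_mulVec, hM.1]

end IsEigenprojection

section Nonexpansive

variable {T : Matrix m m ℝ}

lemma isUnit_one_add_smul_one_sub (hT : ∀ x, ‖T *ᵥ x‖ ≤ ‖x‖) {γ : ℝ} (hγ : 0 ≤ γ) :
    IsUnit (1 + γ • (1 - T)) := by
  rw [← mulVec_injective_iff_isUnit]
  refine (injective_iff_map_eq_zero (1 + γ • (1 - T)).mulVecLin).mpr fun x hx => ?_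
  have hx' : (1 + γ) • x = γ • T *ᵥ x := by
    rw [mulVecLin_apply, add_mulVec, smul_mulVec, sub_mulVec,
      one_mulVec] at hx
    rw [← sub_eq_zero, ← hx]
    module
  have hle : (1 + γ) * ‖x‖ ≤ γ * ‖x‖ := by
    calc (1 + γ) * ‖x‖ = ‖(1 + γ) • x‖ := by rw [norm_smul, Real.norm_of_nonneg (by linarith)]
      _ = γ * ‖T *ᵥ x‖ := by rw [hx', norm_smul, Real.norm_of_nonneg hγ]
      _ ≤ γ * ‖x‖ := mul_le_mul_of_nonneg_left (hT x) hγ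
  exact norm_le_zero_iff.mp (by linarith)

lemma one_sub_mulVec_eq_zero_of_sq (hT : ∀ x, ‖T *ᵥ x‖ ≤ ‖x‖) {x : m → ℝ}
    (hx : (1 - T) *ᵥ ((1 - T) *ᵥ x) = 0) : (1 - T) *ᵥ x = 0 := by
  set w := (1 - T) *ᵥ x
  have hTw : T *ᵥ w = w := by
    rw [sub_mulVec, one_mulVec, sub_eq_zero] at hx
    exact hx.symm
  have hTx : T *ᵥ x = x - w := by
    rw [show w = (1 - T) *ᵥ x from rfl, sub_mulVec, one_mulVec, sub_sub_cancel]
  -- the orbit `Tᵏ x = x - k • w` stays bounded only if `w = 0`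
  have horbit : ∀ k : ℕ, ‖x - (k : ℝ) • w‖ ≤ ‖x‖ := by
    intro k
    induction k with
    | zero => simp
    | succ k ih =>
      calc ‖x - ((k + 1 : ℕ) : ℝ) • w‖ = ‖T *ᵥ (x - (k : ℝ) • w)‖ := by
            rw [mulVec_sub, mulVec_smul, hTw, hTx]
            congr 1
            push_cast
            module
        _ ≤ ‖x‖ := (hT _).trans ih
  by_contra hw
  have hpos : 0 < ‖w‖ := norm_pos_iff.mpr hw
  obtain ⟨k, hk⟩ := exists_nat_gt (2 * ‖x‖ / ‖w‖)
  rw [div_lt_iff₀ hpos] at hk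
  have : (k : ℝ) * ‖w‖ ≤ 2 * ‖x‖ :=
    calc (k : ℝ) * ‖w‖ = ‖x - (x - (k : ℝ) • w)‖ := by
          rw [sub_sub_cancel, norm_smul, Real.norm_natCast]
      _ ≤ ‖x‖ + ‖x - (k : ℝ) • w‖ := norm_sub_le _ _
      _ ≤ 2 * ‖x‖ := by linarith [horbit k]
  linarith

end Nonexpansive

lemma IsRowStochastic.matIndex_one_sub [Nonempty m] {P : Matrix m m ℝ}
    (hP : IsRowStochastic P) : matIndex (1 - P) = 1 :=
  matIndex_eq_one (fun _ => one_sub_mulVec_eq_zero_of_sq (IsRowStochastic.norm_mulVec_le hP))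
    ⟨1, one_ne_zero, by rw [sub_mulVec, one_mulVec, IsRowStochastic.mulVec_one hP, sub_self]⟩

lemma isEigenprojection_one_sub_vecMulVec {Q : Matrix m m ℝ} {π : m → ℝ}
    (hQ : Q *ᵥ 1 = 1) (hπ : π ᵥ* Q = π) (hπ1 : π ⬝ᵥ 1 = 1)
    (hker : ∀ x, Q *ᵥ x = x → ∃ c : ℝ, x = c • 1) :
    IsEigenprojection (1 - Q) (vecMulVec 1 π) := by
  set M := vecMulVec (1 : m → ℝ) π with hM
  have hM2 : M * M = M := by rw [hM, vecMulVec_mul_vecMulVec, hπ1, one_smul]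
  have hMA : M * (1 - Q) = 0 := by rw [mul_sub, mul_one, hM, vecMulVec_mul, hπ, sub_self]
  have hAM : (1 - Q) * M = 0 := by rw [sub_mul, one_mul, hM, mul_vecMulVec, hQ, sub_self]
  have hM0 : M ≠ 0 := by
    rintro h
    rcases vecMulVec_eq_zero.mp h with h | h <;> simp [h] at hπ1
  refine isEigenprojection_of_isUnit_add hM2 hAM hMA hM0
    (isUnit_add_of_ker hM2 hMA fun x hx hMx => ?_)
  rw [sub_mulVec, one_mulVec, sub_eq_zero] at hx
  obtain ⟨c, rfl⟩ := hker x hx.symm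
  rw [hM, vecMulVec_mulVec, dotProduct_smul, hπ1, smul_eq_mul, mul_one] at hMx
  simpa using hMx

lemma dotProduct_one_vecMul_inv {B : Matrix m m ℝ}
    (hB : B *ᵥ 1 = 1) (hU : IsUnit B) (v : m → ℝ) : (v ᵥ* B⁻¹) ⬝ᵥ 1 = v ⬝ᵥ 1 :=
  calc (v ᵥ* B⁻¹) ⬝ᵥ 1 = v ⬝ᵥ (B⁻¹ *ᵥ (B *ᵥ 1)) := by rw [hB, dotProduct_mulVec]
    _ = v ⬝ᵥ 1 := by
      rw [mulVec_mulVec, nonsing_inv_mul _ (hU.map detMonoidHom),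
        one_mulVec]

lemma tendsto_inv_one_add_smul {A J : Matrix m m ℝ} (hJ2 : J * J = J) (hAJ : A * J = 0)
    (hJA : J * A = 0) (hU : IsUnit (A + J)) :
    Tendsto (fun ε : ℝ => (1 + (ε⁻¹ - 1) • A)⁻¹) (𝓝[≠] 0) (𝓝 J) := by
  set H : ℝ → Matrix m m ℝ := fun ε => ε • 1 + (1 - ε) • A + J with hH
  have hHcont : Continuous H := by fun_prop
  have hH0 : H 0 = A + J := by simp [hH]
  have hfactor : ∀ ε ≠ 0, (1 + (ε⁻¹ - 1) • A) * (ε • 1 + J) = H ε := fun ε hε => by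
    rw [hH]
    simp only [add_mul, mul_add, one_mul, smul_mul, Matrix.mul_smul, mul_one, hAJ,
      smul_zero, add_zero, smul_smul]
    rw [mul_sub, mul_inv_cancel₀ hε, mul_one]
  have hdet : ∀ᶠ ε in 𝓝 0, IsUnit (H ε).det := by
    have := (hHcont.matrix_det.continuousAt (x := 0)).eventually_ne
      (by rw [hH0]; exact (hU.map detMonoidHom).ne_zero)
    exact this.mono fun ε h => isUnit_iff_ne_zero.mpr h
  have hinv : (fun ε : ℝ => (1 + (ε⁻¹ - 1) • A)⁻¹) =ᶠ[𝓝[≠] 0]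
      fun ε => (ε • 1 + J) * (H ε)⁻¹ := by
    filter_upwards [self_mem_nhdsWithin, nhdsWithin_le_nhds hdet] with ε hε hεdet
    exact inv_eq_right_inv (by rw [← mul_assoc, hfactor ε hε, mul_nonsing_inv _ hεdet])
  have hlim : ContinuousAt (fun ε : ℝ => (ε • 1 + J) * (H ε)⁻¹) 0 := by
    refine (by fun_prop : Continuous fun ε : ℝ => ε • (1 : Matrix m m ℝ) + J).continuousAt.mul ?_
    refine ContinuousAt.comp (f := H) ?_ hHcont.continuousAt
    obtain ⟨u, hu⟩ := hU.map detMonoidHom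
    refine continuousAt_matrix_inv _ ?_
    rw [hH0, ← coe_detMonoidHom, ← hu]
    exact NormedRing.inverse_continuousAt u
  have hJ : ((0 : ℝ) • (1 : Matrix m m ℝ) + J) * (H 0)⁻¹ = J := by
    have hJAJ : J * (A + J) = J := by rw [mul_add, hJA, hJ2, zero_add]
    calc ((0 : ℝ) • (1 : Matrix m m ℝ) + J) * (H 0)⁻¹
        = J * (A + J) * (A + J)⁻¹ := by rw [zero_smul, zero_add, hH0, hJAJ]
      _ = J := by rw [mul_assoc, mul_nonsing_inv _ (hU.map detMonoidHom), mul_one]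
  refine (Tendsto.mono_left ?_ nhdsWithin_le_nhds).congr' hinv.symm
  convert hlim.tendsto
  exact hJ.symm

noncomputable def regQStationary {n : ℕ} (P : Matrix (Fin n) (Fin n) ℝ) (δ : ℝ)
    (v : Fin n → ℝ) : Fin n ⊕ Unit → ℝ :=
  Sum.elim (fun j => (1 + δ)⁻¹ * (v ᵥ* (1 + (δ⁻¹ - 1) • (1 - P))⁻¹) j) fun _ => δ / (1 + δ)

section Regularization

variable {n : ℕ} {P : Matrix (Fin n) (Fin n) ℝ} {δ : ℝ} {v : Fin n → ℝ}

lemma regQ_mulVec_inl (x : Fin n ⊕ Unit → ℝ) (a : Fin n) :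
    (regQ P δ v *ᵥ x) (Sum.inl a) = (1 - δ) * (P *ᵥ (x ∘ Sum.inl)) a + δ * x (Sum.inr ()) := by
  simp [regQ, mulVec, dotProduct, Finset.mul_sum, mul_assoc]

lemma regQ_mulVec_inr (x : Fin n ⊕ Unit → ℝ) (u : Unit) :
    (regQ P δ v *ᵥ x) (Sum.inr u) = v ⬝ᵥ (x ∘ Sum.inl) := by
  simp [regQ, mulVec, dotProduct]

lemma regQ_mulVec_one (hP : P *ᵥ 1 = 1) (hv : ∑ i, v i = 1) : regQ P δ v *ᵥ 1 = 1 := by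
  ext (a | u)
  · simp [regQ_mulVec_inl, hP]
  · simp [regQ_mulVec_inr, dotProduct_one, hv]

lemma le_of_regQ_mulVec_eq (hP : IsRowStochastic P) (hδ : 0 < δ) (hδ1 : δ ≤ 1)
    {x : Fin n ⊕ Unit → ℝ} (hx : regQ P δ v *ᵥ x = x) (a : Fin n) :
    x (Sum.inl a) ≤ x (Sum.inr ()) := by
  have : Nonempty (Fin n) := ⟨a⟩
  obtain ⟨b, hb⟩ := Finite.exists_max (x ∘ Sum.inl)
  have hPb := IsRowStochastic.mulVec_le hP hb b
  have hxb := congrFun hx (Sum.inl b)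
  rw [regQ_mulVec_inl] at hxb
  have : δ * x (Sum.inl b) ≤ δ * x (Sum.inr ()) := by
    have := mul_le_mul_of_nonneg_left hPb (sub_nonneg.mpr hδ1)
    simp only [Function.comp_apply] at this
    linarith
  exact (hb a).trans (le_of_mul_le_mul_left this hδ)

lemma eq_smul_one_of_regQ_mulVec_eq (hP : IsRowStochastic P) (hδ : 0 < δ) (hδ1 : δ ≤ 1)
    {x : Fin n ⊕ Unit → ℝ} (hx : regQ P δ v *ᵥ x = x) : x = x (Sum.inr ()) • 1 := by
  have hneg : regQ P δ v *ᵥ -x = -x := by rw [mulVec_neg, hx]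
  ext (a | ⟨⟩) <;> simp only [Pi.smul_apply, Pi.one_apply, smul_eq_mul, mul_one]
  · refine le_antisymm (le_of_regQ_mulVec_eq hP hδ hδ1 hx a) ?_
    simpa using le_of_regQ_mulVec_eq hP hδ hδ1 hneg a

lemma isUnit_one_add_inv_sub_one_smul (hP : IsRowStochastic P) (hδ : 0 < δ) (hδ1 : δ ≤ 1) :
    IsUnit (1 + (δ⁻¹ - 1) • (1 - P)) :=
  isUnit_one_add_smul_one_sub (IsRowStochastic.norm_mulVec_le hP)
    (sub_nonneg.mpr (one_le_inv_iff₀.mpr ⟨hδ, hδ1⟩))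

lemma sum_vecMul_inv_one_add_smul (hP : IsRowStochastic P) (hv : ∑ i, v i = 1)
    (hδ : 0 < δ) (hδ1 : δ ≤ 1) : ∑ j, (v ᵥ* (1 + (δ⁻¹ - 1) • (1 - P))⁻¹) j = 1 := by
  rw [← dotProduct_one, dotProduct_one_vecMul_inv _ (isUnit_one_add_inv_sub_one_smul hP hδ hδ1),
    dotProduct_one, hv]
  rw [add_mulVec, smul_mulVec, sub_mulVec, IsRowStochastic.mulVec_one hP,
    one_mulVec, sub_self, smul_zero, add_zero]

lemma regQStationary_vecMul_regQ (hP : IsRowStochastic P) (hv : ∑ i, v i = 1)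
    (hδ : 0 < δ) (hδ1 : δ ≤ 1) :
    regQStationary P δ v ᵥ* regQ P δ v = regQStationary P δ v := by
  have huB : v ᵥ* (1 + (δ⁻¹ - 1) • (1 - P))⁻¹ ᵥ* (1 + (δ⁻¹ - 1) • (1 - P)) = v := by
    rw [vecMul_vecMul, nonsing_inv_mul _
      ((isUnit_one_add_inv_sub_one_smul hP hδ hδ1).map detMonoidHom), vecMul_one]
  have hu1 := sum_vecMul_inv_one_add_smul hP hv hδ hδ1
  unfold regQStationary
  generalize v ᵥ* (1 + (δ⁻¹ - 1) • (1 - P))⁻¹ = u at huB hu1 ⊢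
  ext (j | _)
  · rw [vecMul_add, vecMul_one, vecMul_smul, vecMul_sub, vecMul_one] at huB
    have hj := congrFun huB j
    simp only [Pi.add_apply, Pi.smul_apply, Pi.sub_apply, smul_eq_mul, vecMul, dotProduct] at hj
    field_simp at hj
    simp only [regQ, vecMul, dotProduct, Fintype.sum_sum_type, Sum.elim_inl, Sum.elim_inr,
      fromBlocks_apply₁₁, fromBlocks_apply₂₁, Matrix.smul_apply, smul_eq_mul, of_apply,
      Finset.univ_unique, Finset.sum_singleton]
    rw [← Finset.sum_congr rfl fun a _ => (by ring : (1 + δ)⁻¹ * (1 - δ) * (u a * P a j) =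
      (1 + δ)⁻¹ * u a * ((1 - δ) * P a j)), ← Finset.mul_sum]
    linear_combination -(1 + δ)⁻¹ * hj
  · simp only [regQ, vecMul, dotProduct, Fintype.sum_sum_type, Sum.elim_inl, Sum.elim_inr,
      fromBlocks_apply₁₂, fromBlocks_apply₂₂, of_apply, Matrix.zero_apply, mul_zero,
      Finset.univ_unique, Finset.sum_singleton, add_zero, ← Finset.sum_mul, ← Finset.mul_sum, hu1]
    field_simp

lemma regQStationary_dotProduct_one (hP : IsRowStochastic P) (hv : ∑ i, v i = 1)
    (hδ : 0 < δ) (hδ1 : δ ≤ 1) : regQStationary P δ v ⬝ᵥ 1 = 1 := by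
  simp only [regQStationary, dotProduct_one, Fintype.sum_sum_type, Sum.elim_inl, Sum.elim_inr,
    ← Finset.mul_sum, Finset.univ_unique, Finset.sum_singleton,
    sum_vecMul_inv_one_add_smul hP hv hδ hδ1]
  field_simp

lemma tendsto_regQStationary {n : ℕ} [Nonempty (Fin n)] {P J : Matrix (Fin n) (Fin n) ℝ}
    (hP : IsRowStochastic P) (hJ : IsEigenprojection (1 - P) J) (v : Fin n → ℝ) :
    Tendsto (fun ε => regQStationary P ε v) (𝓝[>] 0) (𝓝 (Sum.elim (v ᵥ* J) 0)) := by
  have h1 := IsRowStochastic.matIndex_one_sub hP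
  have hR := (tendsto_inv_one_add_smul hJ.1 (IsEigenprojection.mul_eq_zero hJ h1)
    (IsEigenprojection.mul_eq_zero' hJ h1) (IsEigenprojection.isUnit_add hJ h1)).mono_left
    (nhdsGT_le_nhdsNE 0)
  have hscale : Tendsto (fun ε : ℝ => (1 + ε)⁻¹) (𝓝[>] 0) (𝓝 1) := by
    simpa using ((continuous_const.add continuous_id).tendsto (0 : ℝ)).inv₀
      (by norm_num : (1 : ℝ) + 0 ≠ 0) |>.mono_left nhdsWithin_le_nhds
  rw [tendsto_pi_nhds]
  rintro (j | _)
  · simpa [regQStationary] using hscale.mul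
      (((continuous_apply j).comp (continuous_const.matrix_vecMul continuous_id)).tendsto J
        |>.comp hR)
  · simpa [regQStationary, div_eq_mul_inv] using
      (tendsto_nhdsWithin_of_tendsto_nhds tendsto_id).mul hscale

theorem eigenprojection_regularized_deGroot_general {n : ℕ}
    (P J : Matrix (Fin n) (Fin n) ℝ)
    (hP : IsRowStochastic P) (hJ : IsEigenprojection (1 - P) J)
    (v : Fin n → ℝ) (hvsum : ∑ i, v i = 1)
    (δ : ℝ) (hδ : 0 < δ) (hδ1 : δ ≤ 1) (γ : ℝ) (hγ : γ = δ⁻¹ - 1) :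
    IsEigenprojection (1 - regQ P δ v)
      (Matrix.vecMulVec (fun _ => (1 : ℝ))
        (Sum.elim
          (fun j => (1 + δ)⁻¹ * (v ᵥ* (1 + γ • (1 - P))⁻¹) j)
          (fun _ => δ / (1 + δ)))) ∧
    Tendsto
      (fun ε : ℝ =>
        Matrix.vecMulVec (fun _ : Fin n ⊕ Unit => (1 : ℝ))
          (Sum.elim
            (fun j => (1 + ε)⁻¹ * (v ᵥ* (1 + (ε⁻¹ - 1) • (1 - P))⁻¹) j)
            (fun _ : Unit => ε / (1 + ε))))
      (𝓝[>] 0)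
      (𝓝 (Matrix.vecMulVec (fun _ : Fin n ⊕ Unit => (1 : ℝ))
        (Sum.elim (fun j => (v ᵥ* J) j) (fun _ : Unit => (0 : ℝ))))) := by
  subst hγ
  have : Nonempty (Fin n) :=
    Finset.univ_nonempty_iff.mp (Finset.nonempty_of_sum_ne_zero (hvsum ▸ one_ne_zero))
  refine ⟨isEigenprojection_one_sub_vecMulVec
    (regQ_mulVec_one (IsRowStochastic.mulVec_one hP) hvsum)
    (regQStationary_vecMul_regQ hP hvsum hδ hδ1) (regQStationary_dotProduct_one hP hvsum hδ hδ1)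
    fun x hx => ⟨_, eq_smul_one_of_regQ_mulVec_eq hP hδ hδ1 hx⟩, ?_⟩
  exact (continuous_const.matrix_vecMulVec continuous_id).tendsto _ |>.comp
    (tendsto_regQStationary hP hJ v)

/-- Regularized DeGroot pooling with a hub: for `δ ∈ (0,1]` and `γ = δ⁻¹ - 1`,
the eigenprojection of `I′ - Q_{δ,v}` equals
`1′·(1/(1+δ))·[vᵀ(I + γ(I-P))⁻¹  δ]`, and as `δ → 0⁺` it converges to
`1′·[vᵀ(I-P)^⊢  0]`. -/
theorem eigenprojection_regularized_deGroot {n : ℕ}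
    (P J : Matrix (Fin n) (Fin n) ℝ)
    (hP : IsRowStochastic P) (hJ : IsEigenprojection (1 - P) J)
    (v : Fin n → ℝ) (hv : ∀ i, 0 ≤ v i) (hvsum : ∑ i, v i = 1)
    (δ : ℝ) (hδ : 0 < δ) (hδ1 : δ ≤ 1) (γ : ℝ) (hγ : γ = δ⁻¹ - 1) :
    IsEigenprojection (1 - regQ P δ v)
      (Matrix.vecMulVec (fun _ => (1 : ℝ))
        (Sum.elim
          (fun j => (1 + δ)⁻¹ * (v ᵥ* (1 + γ • (1 - P))⁻¹) j)
          (fun _ => δ / (1 + δ)))) ∧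
    Tendsto
      (fun ε : ℝ =>
        Matrix.vecMulVec (fun _ : Fin n ⊕ Unit => (1 : ℝ))
          (Sum.elim
            (fun j => (1 + ε)⁻¹ * (v ᵥ* (1 + (ε⁻¹ - 1) • (1 - P))⁻¹) j)
            (fun _ : Unit => ε / (1 + ε))))
      (𝓝[>] 0)
      (𝓝 (Matrix.vecMulVec (fun _ : Fin n ⊕ Unit => (1 : ℝ))
        (Sum.elim (fun j => (v ᵥ* J) j) (fun _ : Unit => (0 : ℝ))))) :=
  eigenprojection_regularized_deGroot_general P J hP hJ v hvsum δ hδ hδ1 γ hγ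
end Regularization
end

section
/- Let P be an n×n row-stochastic matrix, let v ∈ ℝⁿ be a distribution vector, let δ ∈ (0,1], set γ = δ⁻¹ − 1 and V = 1vᵀ, let J̄ = (I−P)^⊢, and let x⁰ ∈ ℝⁿ. Then: (1) ((1−δ)P + δV)^k · x⁰ converges as k → ∞ to 1·(vᵀ(I + γ(I−P))⁻¹ x⁰); (2) the double limit lim_{δ→0⁺} lim_{k→∞} ((1−δ)P + δV)^k x⁰ equals 1·(vᵀJ̄ x⁰); (3) if v = (1/n)·1, then the double limit equals 1·(1/n)·Σ_{j=1}^n J̄_{·j} x⁰_j, where J̄_{·j} = Σ_{i=1}^n J̄_{ij} is the j-th column sum of J̄. (Regularization of PageRank type for DeGroot's process.) -/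
open Matrix Filter Topology

/-!
With `M = (1 - δ) P` and `D = δ 1 vᵀ`, the matrix `Q = M + D` has unit row sums, so `Q D = D` and
`Q ^ k = M ^ k + D (1 + M + ⋯ + M ^ (k - 1))`. Since `‖M‖∞ ≤ 1 - δ < 1`, this tends to
`D (1 - M)⁻¹ = 1 vᵀ (1 + γ (1 - P))⁻¹`.

For the limit `ε → 0⁺`, the eigenvalue `1` of `P` is semisimple: a Jordan chain would make `P ^ k`
grow, while powers of `P` are contractions. Hence `ker (1 - P) ^ ind = ker (1 - P)` and
`range (1 - P) ^ ind ⊆ range (1 - P)`, so `(1 - P) J̄ = 0` and `1 - J̄ = (1 - P) B` for some `B`.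
Then `R_ε = (1 + (ε⁻¹ - 1) (1 - P))⁻¹` fixes `J̄`, has `‖R_ε‖∞ ≤ 1`, and
`R_ε - J̄ = R_ε (1 - P) B = ε (1 - R_ε P) B = O(ε)`.
-/

/- Matrices carry the `ℓ∞` operator norm (maximal absolute row sum), in which row-stochastic
matrices are contractions. -/
attribute [local instance] Matrix.linftyOpNormedAddCommGroup Matrix.linftyOpNormedRing
  Matrix.linftyOpNormedAlgebra

theorem add_pow_eq_pow_add_mul_geom_sum {R : Type*} [Ring R] {a b : R} (h : (a + b) * b = b)
    (k : ℕ) : (a + b) ^ k = a ^ k + b * ∑ i ∈ Finset.range k, a ^ i := by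
  have hb : ∀ k : ℕ, (a + b) ^ k * b = b := by
    intro k
    induction k with
    | zero => simp
    | succ k ih => rw [pow_succ', mul_assoc, ih, h]
  induction k with
  | zero => simp
  | succ k ih =>
    rw [pow_succ, mul_add, hb, ih, Finset.sum_range_succ', add_mul, mul_assoc, Finset.sum_mul]
    simp only [← pow_succ, pow_zero, mul_add, mul_one, add_assoc]

theorem tendsto_add_pow_of_norm_lt_one {R : Type*} [NormedRing R] [HasSummableGeomSeries R]
    {a b : R} (ha : ‖a‖ < 1) (h : (a + b) * b = b) :
    Tendsto (fun k => (a + b) ^ k) atTop (𝓝 (b * Ring.inverse (1 - a))) := by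
  have hsum := ((hasSum_geom_series_inverse a ha).tendsto_sum_nat).const_mul b
  simpa [add_pow_eq_pow_add_mul_geom_sum h] using
    (tendsto_pow_atTop_nhds_zero_of_norm_lt_one ha).add hsum

section

variable {m : Type*} [Fintype m]

theorem Matrix.const_vecMul_dotProduct {n R : Type*} [Fintype n] [CommSemiring R] (c : R)
    (A : Matrix m n R) (x : n → R) :
    ((fun _ => c) ᵥ* A) ⬝ᵥ x = c * ∑ j, (∑ i, A i j) * x j := by
  simp [vecMul, dotProduct, Finset.mul_sum, Finset.sum_mul, mul_assoc]

theorem Matrix.range_mulVecLin_mul_le {l n R : Type*} [Fintype n] [CommSemiring R]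
    (A : Matrix l m R) (B : Matrix m n R) :
    LinearMap.range (A * B).mulVecLin ≤ LinearMap.range A.mulVecLin := by
  rw [mulVecLin_mul]
  exact LinearMap.range_comp_le_range _ _

theorem Matrix.exists_mul_eq_of_range_le {l n R : Type*} [Fintype n] [DecidableEq n]
    [CommSemiring R] {A : Matrix l m R} {C : Matrix l n R}
    (h : LinearMap.range C.mulVecLin ≤ LinearMap.range A.mulVecLin) :
    ∃ B : Matrix m n R, A * B = C := by
  have hcol : ∀ j, ∃ b, A *ᵥ b = C *ᵥ Pi.single j 1 := fun j =>
    h (LinearMap.mem_range_self C.mulVecLin (Pi.single j 1))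
  choose b hb using hcol
  refine ⟨(Matrix.of b)ᵀ, ?_⟩
  ext i j
  simpa [mulVec, dotProduct, mul_apply, Pi.single_apply] using congrFun (hb j) i

theorem IsRowStochastic.mulVec_one_s19 {P : Matrix m m ℝ} (hP : IsRowStochastic P) :
    P *ᵥ (fun _ => 1) = fun _ => 1 := by
  ext i
  simp [mulVec, dotProduct, hP.2 i]

theorem IsRowStochastic.linfty_opNorm_le_one {P : Matrix m m ℝ} (hP : IsRowStochastic P) :
    ‖P‖ ≤ 1 := by
  rw [linfty_opNorm_def, NNReal.coe_le_one, Finset.sup_le_iff]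
  intro i _
  rw [← NNReal.coe_le_one, NNReal.coe_sum]
  simp [abs_of_nonneg (hP.1 i _), hP.2 i]

variable [DecidableEq m]

theorem isRowStochastic_one : IsRowStochastic (1 : Matrix m m ℝ) :=
  ⟨fun i j => by by_cases h : i = j <;> simp [one_apply, h], fun i => by simp [one_apply]⟩

theorem Matrix.linfty_opNorm_inv_one_sub_le {A : Matrix m m ℝ} (hA : ‖A‖ < 1) :
    ‖(1 - A)⁻¹‖ ≤ (1 - ‖A‖)⁻¹ := by
  rw [nonsing_inv_eq_ringInverse, ← geom_series_eq_inverse A hA]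
  linarith [tsum_geometric_le_of_norm_lt_one A hA,
    (isRowStochastic_one (m := m)).linfty_opNorm_le_one]

theorem Matrix.isUnit_det_one_sub {A : Matrix m m ℝ} (hA : ‖A‖ < 1) : IsUnit (1 - A).det :=
  (isUnit_iff_isUnit_det _).mp (Units.oneSub A hA).isUnit

theorem rank_pow_matIndex_succ_eq (A : Matrix m m ℝ) :
    (A ^ (matIndex A + 1)).rank = (A ^ matIndex A).rank := by
  -- `sInf ∅ = 0`, so what matters is that the ranks of the powers cannot decrease forever
  suffices hne : {k : ℕ | (A ^ (k + 1)).rank = (A ^ k).rank}.Nonempty from Nat.sInf_mem hne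
  by_contra hempty
  have hlt : ∀ k, (A ^ (k + 1)).rank < (A ^ k).rank := fun k =>
    (pow_succ A k ▸ rank_mul_le_left _ _).lt_of_ne fun hk => hempty ⟨k, hk⟩
  have hdecr : ∀ k, (A ^ k).rank + k ≤ Fintype.card m := by
    intro k
    induction k with
    | zero => simp
    | succ k ih => linarith [hlt k]
  linarith [hdecr (Fintype.card m + 1)]

theorem range_pow_matIndex_le_range (A : Matrix m m ℝ) :
    LinearMap.range (A ^ matIndex A).mulVecLin ≤ LinearMap.range A.mulVecLin := by
  have hstable : LinearMap.range (A ^ (matIndex A + 1)).mulVecLin =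
      LinearMap.range (A ^ matIndex A).mulVecLin :=
    Submodule.eq_of_le_of_finrank_eq (pow_succ A _ ▸ range_mulVecLin_mul_le _ _)
      (rank_pow_matIndex_succ_eq A)
  rw [← hstable, pow_succ']
  exact range_mulVecLin_mul_le _ _

namespace IsEigenprojection

variable {A J : Matrix m m ℝ}

theorem mul_eq_zero_s19 (hJ : IsEigenprojection A J)
    (hker : LinearMap.ker (A ^ matIndex A).mulVecLin ≤ LinearMap.ker A.mulVecLin) :
    A * J = 0 := by
  apply toLin'.injective
  rw [map_zero, toLin'_apply', mulVecLin_mul]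
  exact LinearMap.range_le_ker_iff.mp (hJ.2.1 ▸ hker)

theorem exists_mul_eq_one_sub (hJ : IsEigenprojection A J) :
    ∃ B : Matrix m m ℝ, A * B = 1 - J := by
  refine exists_mul_eq_of_range_le (le_trans ?_ (range_pow_matIndex_le_range A))
  rw [← hJ.2.2, LinearMap.range_le_ker_iff, ← mulVecLin_mul, mul_sub, mul_one, hJ.1, sub_self]
  simp

end IsEigenprojection

namespace IsRowStochastic

variable {P : Matrix m m ℝ}

theorem norm_smul_le (hP : IsRowStochastic P) {t : ℝ} (ht : 0 ≤ t) : ‖t • P‖ ≤ t := by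
  rw [norm_smul, Real.norm_of_nonneg ht]
  exact mul_le_of_le_one_right ht hP.linfty_opNorm_le_one

theorem norm_pow_mulVec_le (hP : IsRowStochastic P) (k : ℕ) (x : m → ℝ) :
    ‖(P ^ k) *ᵥ x‖ ≤ ‖x‖ := by
  induction k with
  | zero => simp
  | succ k ih =>
    rw [pow_succ', ← mulVec_mulVec]
    exact (linfty_opNorm_mulVec _ _).trans
      (mul_le_of_le_one_left (norm_nonneg _) hP.linfty_opNorm_le_one |>.trans ih)

theorem mulVec_eq_zero_of_sq (hP : IsRowStochastic P) {x : m → ℝ}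
    (hx : (1 - P) *ᵥ ((1 - P) *ᵥ x) = 0) : (1 - P) *ᵥ x = 0 := by
  set y := (1 - P) *ᵥ x
  have hPy : P *ᵥ y = y := by simpa [sub_mulVec, sub_eq_zero, eq_comm] using hx
  have hPx : P *ᵥ x = x - y := by simp [y, sub_mulVec]
  have hpow : ∀ k : ℕ, (P ^ k) *ᵥ x = x - (k : ℝ) • y := by
    intro k
    induction k with
    | zero => simp
    | succ k ih =>
      rw [pow_succ', ← mulVec_mulVec, ih, mulVec_sub, mulVec_smul, hPy, hPx]
      push_cast
      module
  have hbound : ∀ k : ℕ, k * ‖y‖ ≤ 2 * ‖x‖ := fun k => calc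
    k * ‖y‖ = ‖x - (x - (k : ℝ) • y)‖ := by simp [norm_smul]
    _ ≤ ‖x‖ + ‖(P ^ k) *ᵥ x‖ := by rw [← hpow]; exact norm_sub_le _ _
    _ ≤ 2 * ‖x‖ := by linarith [hP.norm_pow_mulVec_le k x]
  by_contra hy
  obtain ⟨k, hk⟩ := exists_nat_gt (2 * ‖x‖ / ‖y‖)
  rw [div_lt_iff₀ (norm_pos_iff.mpr hy)] at hk
  linarith [hbound k]

theorem ker_pow_le_ker (hP : IsRowStochastic P) (k : ℕ) :
    LinearMap.ker ((1 - P) ^ k).mulVecLin ≤ LinearMap.ker (1 - P).mulVecLin := by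
  induction k with
  | zero => intro x hx; simp_all
  | succ k ih =>
    intro x hx
    simp only [LinearMap.mem_ker, mulVecLin_apply, pow_succ, ← mulVec_mulVec] at hx ⊢
    exact hP.mulVec_eq_zero_of_sq (ih hx)

theorem inv_one_add_smul_one_sub (hP : IsRowStochastic P) {δ : ℝ} (hδ : 0 < δ) (hδ1 : δ ≤ 1) :
    (1 + (δ⁻¹ - 1) • (1 - P))⁻¹ = δ • (1 - (1 - δ) • P)⁻¹ := by
  have hunit := isUnit_det_one_sub ((hP.norm_smul_le (sub_nonneg.mpr hδ1)).trans_lt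
    (by linarith))
  have hscale : 1 + (δ⁻¹ - 1) • (1 - P) = δ⁻¹ • (1 - (1 - δ) • P) := by
    have hcoef : δ⁻¹ * (1 - δ) = δ⁻¹ - 1 := by field_simp
    simp only [smul_sub, smul_smul, hcoef]
    module
  rw [hscale]
  refine inv_eq_left_inv ?_
  rw [Matrix.smul_mul, Matrix.mul_smul, smul_smul, mul_inv_cancel₀ hδ.ne', one_smul,
    nonsing_inv_mul _ hunit]

theorem norm_inv_one_add_smul_one_sub_sub_le (hP : IsRowStochastic P) {J B : Matrix m m ℝ}
    (hJ : (1 - P) * J = 0) (hB : (1 - P) * B = 1 - J) {ε : ℝ} (hε : 0 < ε) (hε1 : ε ≤ 1) :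
    ‖(1 + (ε⁻¹ - 1) • (1 - P))⁻¹ - J‖ ≤ 2 * ‖B‖ * ε := by
  have hεP : ‖(1 - ε) • P‖ < 1 := (hP.norm_smul_le (sub_nonneg.mpr hε1)).trans_lt (by linarith)
  set W := (1 - (1 - ε) • P)⁻¹
  have hW : W * (1 - (1 - ε) • P) = 1 := nonsing_inv_mul _ (isUnit_det_one_sub hεP)
  have hεW : ‖ε • W‖ ≤ 1 := calc
    ‖ε • W‖ = ε * ‖W‖ := by rw [norm_smul, Real.norm_of_nonneg hε.le]
    _ ≤ ε * (1 - ‖(1 - ε) • P‖)⁻¹ := by gcongr; exact linfty_opNorm_inv_one_sub_le hεP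
    _ ≤ ε * ε⁻¹ := by gcongr; linarith [hP.norm_smul_le (sub_nonneg.mpr hε1)]
    _ = 1 := mul_inv_cancel₀ hε.ne'
  have hPJ : P * J = J := by
    rw [sub_mul, one_mul, sub_eq_zero] at hJ
    exact hJ.symm
  have hJ' : (1 - (1 - ε) • P) * J = ε • J := by
    rw [sub_mul, one_mul, Matrix.smul_mul, hPJ]
    module
  have hWJ : ε • W * J = J := calc
    ε • W * J = W * ((1 - (1 - ε) • P) * J) := by rw [hJ', Matrix.smul_mul, Matrix.mul_smul]
    _ = J := by rw [← Matrix.mul_assoc, hW, Matrix.one_mul]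
  have hWA : ε • W * (1 - P) = ε • (1 - ε • W * P) := by
    rw [show (1 : Matrix m m ℝ) - P = (1 - (1 - ε) • P) - ε • P by module, Matrix.smul_mul,
      Matrix.mul_sub, hW, Matrix.mul_smul, Matrix.smul_mul]
  have hdiff : ε • W - J = ε • ((1 - ε • W * P) * B) := calc
    ε • W - J = ε • W * ((1 - P) * B) := by rw [hB, Matrix.mul_sub, Matrix.mul_one, hWJ]
    _ = ε • ((1 - ε • W * P) * B) := by rw [← Matrix.mul_assoc, hWA, Matrix.smul_mul]
  rw [hP.inv_one_add_smul_one_sub hε hε1, hdiff]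
  calc ‖ε • ((1 - ε • W * P) * B)‖ ≤ ε * ((‖(1 : Matrix m m ℝ)‖ + ‖ε • W‖ * ‖P‖) * ‖B‖) := by
        rw [norm_smul, Real.norm_of_nonneg hε.le]
        gcongr
        refine (norm_mul_le _ _).trans (mul_le_mul_of_nonneg_right ?_ (norm_nonneg _))
        exact (norm_sub_le _ _).trans (add_le_add le_rfl (norm_mul_le _ _))
    _ ≤ ε * ((1 + 1 * 1) * ‖B‖) := by
        gcongr
        · exact isRowStochastic_one.linfty_opNorm_le_one
        · exact hP.linfty_opNorm_le_one
    _ = 2 * ‖B‖ * ε := by ring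

theorem tendsto_inv_one_add_smul_one_sub (hP : IsRowStochastic P) {J B : Matrix m m ℝ}
    (hJ : (1 - P) * J = 0) (hB : (1 - P) * B = 1 - J) :
    Tendsto (fun ε : ℝ => (1 + (ε⁻¹ - 1) • (1 - P))⁻¹) (𝓝[>] 0) (𝓝 J) := by
  refine tendsto_iff_norm_sub_tendsto_zero.mpr ?_
  refine squeeze_zero_norm' (a := fun ε => 2 * ‖B‖ * ε) ?_ ?_
  · filter_upwards [Ioc_mem_nhdsGT zero_lt_one] with ε hε
    rw [norm_norm]
    exact hP.norm_inv_one_add_smul_one_sub_sub_le hJ hB hε.1 hε.2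
  · exact ((continuous_const_mul (2 * ‖B‖)).tendsto' 0 0 (mul_zero _)).mono_left
      nhdsWithin_le_nhds

theorem tendsto_pow_smul_add_smul_vecMulVec (hP : IsRowStochastic P) {v : m → ℝ}
    (hv : ∑ i, v i = 1) {δ : ℝ} (hδ : 0 < δ) (hδ1 : δ ≤ 1) :
    Tendsto (fun k : ℕ => ((1 - δ) • P + δ • vecMulVec (fun _ => 1) v) ^ k) atTop
      (𝓝 (vecMulVec (fun _ => 1) (v ᵥ* (1 + (δ⁻¹ - 1) • (1 - P))⁻¹))) := by
  have hM : ‖(1 - δ) • P‖ < 1 := (hP.norm_smul_le (sub_nonneg.mpr hδ1)).trans_lt (by linarith)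
  have hfix : ((1 - δ) • P + δ • vecMulVec (fun _ => 1) v) * (δ • vecMulVec (fun _ => 1) v) =
      δ • vecMulVec (fun _ => 1) v := by
    rw [Matrix.mul_smul, mul_vecMulVec, add_mulVec, smul_mulVec, smul_mulVec, hP.mulVec_one_s19,
      vecMulVec_mulVec]
    congr 2
    ext i
    simp [dotProduct, hv]
  rw [hP.inv_one_add_smul_one_sub hδ hδ1, vecMul_smul, vecMulVec_smul, ← vecMulVec_mul,
    ← Matrix.smul_mul, nonsing_inv_eq_ringInverse]
  exact tendsto_add_pow_of_norm_lt_one hM hfix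

end IsRowStochastic

end

theorem consensus_pagerank_regularization_general {n : ℕ}
    (P J : Matrix (Fin n) (Fin n) ℝ)
    (hP : IsRowStochastic P) (hJ : IsEigenprojection (1 - P) J)
    (v : Fin n → ℝ) (hvsum : ∑ i, v i = 1)
    (δ : ℝ) (hδ : 0 < δ) (hδ1 : δ ≤ 1) (γ : ℝ) (hγ : γ = δ⁻¹ - 1)
    (x0 : Fin n → ℝ) :
    Tendsto
      (fun k : ℕ =>
        (((1 - δ) • P +
          δ • Matrix.vecMulVec (fun _ : Fin n => (1 : ℝ)) v) ^ k).mulVec x0)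
      atTop (𝓝 (fun _ => (v ᵥ* (1 + γ • (1 - P))⁻¹) ⬝ᵥ x0)) ∧
    Tendsto (fun ε : ℝ => (v ᵥ* (1 + (ε⁻¹ - 1) • (1 - P))⁻¹) ⬝ᵥ x0)
      (𝓝[>] 0) (𝓝 ((v ᵥ* J) ⬝ᵥ x0)) ∧
    ((v = fun _ => (n : ℝ)⁻¹) →
      Tendsto (fun ε : ℝ => (v ᵥ* (1 + (ε⁻¹ - 1) • (1 - P))⁻¹) ⬝ᵥ x0)
        (𝓝[>] 0)
        (𝓝 ((n : ℝ)⁻¹ * ∑ j, (∑ i, J i j) * x0 j))) := by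
  obtain ⟨B, hB⟩ := hJ.exists_mul_eq_one_sub
  have hresolvent : Tendsto (fun ε : ℝ => (v ᵥ* (1 + (ε⁻¹ - 1) • (1 - P))⁻¹) ⬝ᵥ x0)
      (𝓝[>] 0) (𝓝 ((v ᵥ* J) ⬝ᵥ x0)) :=
    (((continuous_const.matrix_vecMul continuous_id).dotProduct continuous_const).tendsto J).comp
      (hP.tendsto_inv_one_add_smul_one_sub (hJ.mul_eq_zero_s19 (hP.ker_pow_le_ker _)) hB)
  refine ⟨?_, hresolvent, fun hv => ?_⟩
  · have hlim : vecMulVec (fun _ : Fin n => (1 : ℝ)) (v ᵥ* (1 + γ • (1 - P))⁻¹) *ᵥ x0 =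
        fun _ => (v ᵥ* (1 + γ • (1 - P))⁻¹) ⬝ᵥ x0 := by
      ext
      simp [vecMulVec_mulVec]
    rw [← hlim, hγ]
    exact ((continuous_id.matrix_mulVec continuous_const).tendsto _).comp
      (hP.tendsto_pow_smul_add_smul_vecMulVec hvsum hδ hδ1)
  · subst hv
    rwa [Matrix.const_vecMul_dotProduct] at hresolvent

/-- PageRank-type regularization of DeGroot's process:
(1) `((1-δ)P + δV)^k x⁰ → 1·(vᵀ(I+γ(I-P))⁻¹x⁰)` as `k → ∞`, where `V = 1vᵀ`;
(2) the double limit (`k → ∞`, then `δ → 0⁺`) equals `1·(vᵀJ̄x⁰)`;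
(3) if `v = (1/n)·1`, the double limit equals `1·(1/n)·Σⱼ J̄_{·j} x⁰ⱼ`. -/
theorem consensus_pagerank_regularization {n : ℕ}
    (P J : Matrix (Fin n) (Fin n) ℝ)
    (hP : IsRowStochastic P) (hJ : IsEigenprojection (1 - P) J)
    (v : Fin n → ℝ) (hv : ∀ i, 0 ≤ v i) (hvsum : ∑ i, v i = 1)
    (δ : ℝ) (hδ : 0 < δ) (hδ1 : δ ≤ 1) (γ : ℝ) (hγ : γ = δ⁻¹ - 1)
    (x0 : Fin n → ℝ) :
    Tendsto
      (fun k : ℕ =>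
        (((1 - δ) • P +
          δ • Matrix.vecMulVec (fun _ : Fin n => (1 : ℝ)) v) ^ k).mulVec x0)
      atTop (𝓝 (fun _ => (v ᵥ* (1 + γ • (1 - P))⁻¹) ⬝ᵥ x0)) ∧
    Tendsto (fun ε : ℝ => (v ᵥ* (1 + (ε⁻¹ - 1) • (1 - P))⁻¹) ⬝ᵥ x0)
      (𝓝[>] 0) (𝓝 ((v ᵥ* J) ⬝ᵥ x0)) ∧
    ((v = fun _ => (n : ℝ)⁻¹) →
      Tendsto (fun ε : ℝ => (v ᵥ* (1 + (ε⁻¹ - 1) • (1 - P))⁻¹) ⬝ᵥ x0)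
        (𝓝[>] 0)
        (𝓝 ((n : ℝ)⁻¹ * ∑ j, (∑ i, J i j) * x0 j))) :=
  consensus_pagerank_regularization_general P J hP hJ v hvsum δ hδ hδ1 γ hγ x0
end
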